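/- arXiv:1912.00056 — 4 statements merged into one kernel-verified Lean document; each statement's English description precedes it below -/
import Mathlib

section
/- Concatenating two big-walks yields a big-walk; consequently the counting sequence satisfies the supermultiplicative inequality b_{m+n} ≥ b_m * b_n for all m, n ≥ 0. -/
/-!
At the junction of two big-walks the walk sits on the antidiagonal x + y = 0, which is the
lowest antidiagonal the first walk ever reaches. So the second walk, translated there, stays in
the half-plane; the first walk ends with an S or W step, so no ES or NW corner is created; and a
quarter-plane subloop straddling the junction must already close up at the junction (its part
inside the first walk moves weakly north-east yet does not raise x + y), so it begins with a
QP-subloop of the first walk, which begins with N. Since concatenation of walks of fixed lengths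
is injective, b_m b_n ≤ b_{m+n}.
-/

open Filter

/-- A step of a lattice walk: North, East, South or West. -/
inductive Step : Type
  | N | E | S | W
  deriving DecidableEq

/-- The vector of a step. -/
def Step.vec : Step → ℤ × ℤ
  | .N => (0, 1)
  | .E => (1, 0)
  | .S => (0, -1)
  | .W => (-1, 0)

/-- The endpoint of a walk starting at the origin. -/
def endpt (w : List Step) : ℤ × ℤ := (w.map Step.vec).sum

/-- All points visited by a walk starting at the origin (including start and end). -/
def positions (w : List Step) : List (ℤ × ℤ) :=
  w.scanl (fun p s => p + s.vec) ((0, 0) : ℤ × ℤ)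

/-- A walk is eager if it contains no ES and no NW corner. -/
def Eager (w : List Step) : Prop :=
  ¬ [Step.E, Step.S] <:+: w ∧ ¬ [Step.N, Step.W] <:+: w

/-- A quarter-plane loop: a nonempty walk returning to its starting point and
staying (weakly) north-east of it. -/
def IsQPLoop (l : List Step) : Prop :=
  l ≠ [] ∧ endpt l = (0, 0) ∧ ∀ p ∈ positions l, 0 ≤ p.1 ∧ 0 ≤ p.2

/-- A walk is standard if every QP-subloop begins with an N step. -/
def Standard (w : List Step) : Prop :=
  ∀ a l b : List Step, w = a ++ l ++ b → IsQPLoop l → l.head? = some Step.N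

/-- The walk stays in the half-plane x + y ≥ 0. -/
def InHalfPlane (w : List Step) : Prop :=
  ∀ p ∈ positions w, 0 ≤ p.1 + p.2

/-- A big-walk: confined to the half-plane x+y ≥ 0, from (0,0) to the line x+y=0,
standard and eager. -/
def IsBigWalk (w : List Step) : Prop :=
  InHalfPlane w ∧ (endpt w).1 + (endpt w).2 = 0 ∧ Standard w ∧ Eager w

/-- A left-walk: a big-walk ending at (x,-x) with x ≤ 0. -/
def IsLeftWalk (w : List Step) : Prop := IsBigWalk w ∧ (endpt w).1 ≤ 0

/-- A right-walk: a big-walk ending at (x,-x) with x ≥ 0. -/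
def IsRightWalk (w : List Step) : Prop := IsBigWalk w ∧ 0 ≤ (endpt w).1

/-- Vertical-happy: every step taken from a point of the lines x+y=0 or x+y=1
is N or S. -/
def VerticalHappy (w : List Step) : Prop :=
  ∀ a s b, w = a ++ s :: b →
    ((endpt a).1 + (endpt a).2 = 0 ∨ (endpt a).1 + (endpt a).2 = 1) →
    s = Step.N ∨ s = Step.S

/-- A deque-walk: a vertical-happy big-walk. -/
def IsDequeWalk (w : List Step) : Prop := IsBigWalk w ∧ VerticalHappy w

/-- The walk stays in the quarter plane x, y ≥ 0. -/
def InQuarterPlane (w : List Step) : Prop :=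
  ∀ p ∈ positions w, 0 ≤ p.1 ∧ 0 ≤ p.2

/-- A 2sip-walk: a quarter-plane walk from (0,0) to (0,0), standard and eager. -/
def Is2sipWalk (w : List Step) : Prop :=
  InQuarterPlane w ∧ endpt w = (0, 0) ∧ Standard w ∧ Eager w

/-- `bCount n` = number of big-walks of length 2n. -/
noncomputable def bCount (n : ℕ) : ℕ :=
  Nat.card {w : List Step // w.length = 2 * n ∧ IsBigWalk w}

/-- `blCount n` = number of left-walks of length 2n. -/
noncomputable def blCount (n : ℕ) : ℕ :=
  Nat.card {w : List Step // w.length = 2 * n ∧ IsLeftWalk w}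

/-- `brCount n` = number of right-walks of length 2n. -/
noncomputable def brCount (n : ℕ) : ℕ :=
  Nat.card {w : List Step // w.length = 2 * n ∧ IsRightWalk w}

/-- `dCount n` = number of deque-walks of length 2n. -/
noncomputable def dCount (n : ℕ) : ℕ :=
  Nat.card {w : List Step // w.length = 2 * n ∧ IsDequeWalk w}

/-- `pCount n` = number of 2sip-walks of length 2n. -/
noncomputable def pCount (n : ℕ) : ℕ :=
  Nat.card {w : List Step // w.length = 2 * n ∧ Is2sipWalk w}

namespace List

variable {α : Type*}

theorem append_eq_append_append_cases {u v a l b : List α} (h : u ++ v = a ++ l ++ b) :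
    (∃ c, u = a ++ l ++ c) ∨ (∃ c, v = c ++ l ++ b) ∨
      ∃ l₁ l₂, l₁ ≠ [] ∧ l₂ ≠ [] ∧ l = l₁ ++ l₂ ∧ u = a ++ l₁ ∧ v = l₂ ++ b := by
  rw [append_assoc] at h
  rcases append_eq_append_iff.1 h with ⟨a', _, hv⟩ | ⟨c', hu, hlb⟩
  · exact Or.inr (Or.inl ⟨a', by rw [hv, append_assoc]⟩)
  rcases append_eq_append_iff.1 hlb with ⟨x, hc', hb⟩ | ⟨x, hl, hv⟩
  · exact Or.inl ⟨x, by rw [hu, hc', append_assoc]⟩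
  rcases eq_or_ne c' [] with rfl | hc'
  · exact Or.inr (Or.inl ⟨[], by simp_all⟩)
  rcases eq_or_ne x [] with rfl | hx
  · exact Or.inl ⟨[], by simp_all⟩
  exact Or.inr (Or.inr ⟨c', x, hc', hx, hl, hu, hv⟩)

theorem pair_infix_append_of_getLast?_ne {x y : α} {u v : List α} (h : [x, y] <:+: u ++ v)
    (hx : u.getLast? ≠ some x) : [x, y] <:+: u ∨ [x, y] <:+: v := by
  obtain ⟨s, t, hst⟩ := h
  rcases append_eq_append_append_cases hst.symm with
    ⟨c, hu⟩ | ⟨c, hv⟩ | ⟨l₁, l₂, hl₁, hl₂, hxy, hu, -⟩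
  · exact Or.inl ⟨s, c, hu.symm⟩
  · exact Or.inr ⟨c, t, hv.symm⟩
  obtain ⟨x', r, rfl⟩ := exists_cons_of_ne_nil hl₁
  obtain ⟨rfl, hr⟩ : x' = x ∧ r ++ l₂ = [y] := by simpa using hxy.symm
  obtain rfl : r = [] := by simp_all [append_eq_singleton_iff]
  exact absurd (by simp [hu]) hx

end List

theorem Step.eq_S_or_W_of_vec_sum_nonpos {s : Step} (h : s.vec.1 + s.vec.2 ≤ 0) :
    s = .S ∨ s = .W := by
  cases s <;> simp_all [Step.vec]

theorem endpt_cons (s : Step) (w : List Step) : endpt (s :: w) = s.vec + endpt w := by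
  simp [endpt]

theorem endpt_singleton (s : Step) : endpt [s] = s.vec := by
  simp [endpt]

theorem endpt_append (u v : List Step) : endpt (u ++ v) = endpt u + endpt v := by
  simp [endpt]

theorem foldl_add_vec (c : ℤ × ℤ) (w : List Step) :
    w.foldl (fun p s => p + s.vec) c = c + endpt w := by
  induction w generalizing c with
  | nil => simp [endpt]
  | cons s w ih => simp [ih, endpt_cons, add_assoc]

theorem scanl_add_vec_add (c d : ℤ × ℤ) (w : List Step) :
    w.scanl (fun p s => p + s.vec) (c + d) = (w.scanl (fun p s => p + s.vec) d).map (c + ·) := by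
  induction w generalizing d with
  | nil => simp
  | cons s w ih => simp [← ih, add_assoc]

theorem positions_append (u v : List Step) :
    positions (u ++ v) = positions u ++ ((positions v).map (endpt u + ·)).tail := by
  rw [positions, List.scanl_append, foldl_add_vec, add_comm, scanl_add_vec_add]
  rfl

theorem positions_subset_positions_append (u v : List Step) :
    positions u ⊆ positions (u ++ v) := by
  rw [positions_append]
  exact List.subset_append_left _ _

theorem mem_positions_append {p : ℤ × ℤ} {u v : List Step} (h : p ∈ positions (u ++ v)) :
    p ∈ positions u ∨ ∃ q ∈ positions v, p = endpt u + q := by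
  rw [positions_append, List.mem_append] at h
  refine h.imp_right fun h => ?_
  obtain ⟨q, hq, rfl⟩ := List.mem_map.1 (List.mem_of_mem_tail h)
  exact ⟨q, hq, rfl⟩

theorem endpt_mem_positions (w : List Step) : endpt w ∈ positions w :=
  List.mem_of_getLast? (by simp [positions, List.getLast?_scanl, foldl_add_vec])

theorem InHalfPlane.append {u v : List Step} (hu : InHalfPlane u) (hv : InHalfPlane v)
    (hend : 0 ≤ (endpt u).1 + (endpt u).2) : InHalfPlane (u ++ v) := by
  intro p hp
  rcases mem_positions_append hp with hp | ⟨q, hq, rfl⟩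
  · exact hu p hp
  · have := hv q hq
    simp only [Prod.fst_add, Prod.snd_add]
    omega

def EndsLowest (w : List Step) : Prop :=
  ∀ p ∈ positions w, (endpt w).1 + (endpt w).2 ≤ p.1 + p.2

theorem EndsLowest.eq_S_or_W_of_getLast? {w : List Step} (hw : EndsLowest w) {s : Step}
    (hs : w.getLast? = some s) : s = .S ∨ s = .W := by
  obtain ⟨a, rfl⟩ := List.getLast?_eq_some_iff.1 hs
  have : (endpt (a ++ [s])).1 + (endpt (a ++ [s])).2 ≤ (endpt a).1 + (endpt a).2 :=
    hw _ (positions_subset_positions_append a [s] (endpt_mem_positions a))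
  simp only [endpt_append, endpt_singleton, Prod.fst_add, Prod.snd_add] at this
  exact Step.eq_S_or_W_of_vec_sum_nonpos (by omega)

theorem Eager.append {u v : List Step} (hu : Eager u) (hv : Eager v)
    (hlast : ∀ s ∈ u.getLast?, s = .S ∨ s = .W) : Eager (u ++ v) := by
  have not_last {x : Step} (hx : x ≠ .S ∧ x ≠ .W) : u.getLast? ≠ some x := fun h => by
    rcases hlast x h with rfl | rfl <;> simp at hx
  constructor
  · intro h
    rcases List.pair_infix_append_of_getLast?_ne h (not_last (by decide)) with h | h
    exacts [hu.1 h, hv.1 h]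
  · intro h
    rcases List.pair_infix_append_of_getLast?_ne h (not_last (by decide)) with h | h
    exacts [hu.2 h, hv.2 h]

theorem IsQPLoop.of_append {l₁ l₂ : List Step} (hl : IsQPLoop (l₁ ++ l₂)) (hl₁ : l₁ ≠ [])
    (hend : (endpt l₁).1 + (endpt l₁).2 ≤ 0) : IsQPLoop l₁ := by
  have quarter : ∀ p ∈ positions l₁, 0 ≤ p.1 ∧ 0 ≤ p.2 := fun p hp =>
    hl.2.2 p (positions_subset_positions_append l₁ l₂ hp)
  have := quarter _ (endpt_mem_positions l₁)
  exact ⟨hl₁, Prod.ext (by dsimp only; omega) (by dsimp only; omega), quarter⟩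

theorem Standard.append {u v : List Step} (hu : Standard u) (hv : Standard v)
    (hlow : EndsLowest u) : Standard (u ++ v) := by
  intro a l b hab hloop
  rcases List.append_eq_append_append_cases hab with
    ⟨c, hc⟩ | ⟨c, hc⟩ | ⟨l₁, l₂, hl₁, -, rfl, rfl, -⟩
  · exact hu a l c hc hloop
  · exact hv c l b hc hloop
  have hstart := hlow _ (positions_subset_positions_append a l₁ (endpt_mem_positions a))
  simp only [endpt_append, Prod.fst_add, Prod.snd_add] at hstart
  have hloop₁ := hloop.of_append hl₁ (by omega)
  rw [List.head?_append, hu a l₁ [] (List.append_nil _).symm hloop₁, Option.some_or]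

theorem IsBigWalk.endsLowest {w : List Step} (hw : IsBigWalk w) : EndsLowest w := fun p hp =>
  hw.2.1 ▸ hw.1 p hp

theorem IsBigWalk.append {u v : List Step} (hu : IsBigWalk u) (hv : IsBigWalk v) :
    IsBigWalk (u ++ v) := by
  have hu_low := hu.endsLowest
  obtain ⟨hu_half, hu_end, hu_std, hu_eager⟩ := hu
  obtain ⟨hv_half, hv_end, hv_std, hv_eager⟩ := hv
  refine ⟨hu_half.append hv_half hu_end.ge, ?_, hu_std.append hv_std hu_low,
    hu_eager.append hv_eager fun s hs => hu_low.eq_S_or_W_of_getLast? hs⟩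
  simp only [endpt_append, Prod.fst_add, Prod.snd_add]
  omega

instance : Fintype Step :=
  ⟨{.N, .E, .S, .W}, fun s => by cases s <;> decide⟩

instance (K : ℕ) (P : List Step → Prop) : Finite {w : List Step // w.length = K ∧ P w} :=
  ((List.finite_length_eq Step K).subset fun _ hw => hw.1).to_subtype

theorem bCount_mul_le_bCount_add (m n : ℕ) : bCount m * bCount n ≤ bCount (m + n) := by
  let concat : {w : List Step // w.length = 2 * m ∧ IsBigWalk w} ×
      {w : List Step // w.length = 2 * n ∧ IsBigWalk w} →
      {w : List Step // w.length = 2 * (m + n) ∧ IsBigWalk w} :=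
    fun p => ⟨p.1.1 ++ p.2.1, by rw [List.length_append, p.1.2.1, p.2.2.1]; ring,
      p.1.2.2.append p.2.2.2⟩
  have concat_injective : Function.Injective concat := by
    rintro ⟨⟨u₁, hu₁⟩, ⟨v₁, hv₁⟩⟩ ⟨⟨u₂, hu₂⟩, ⟨v₂, hv₂⟩⟩ h
    obtain ⟨rfl, rfl⟩ := List.append_inj (congrArg Subtype.val h) (hu₁.1.trans hu₂.1.symm)
    rfl
  rw [bCount, bCount, ← Nat.card_prod]
  exact Nat.card_le_card_of_injective concat concat_injective

/-- Concatenating two big-walks yields a big-walk; consequently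
b_{m+n} ≥ b_m * b_n. -/
theorem bigWalk_concat_and_supermultiplicative :
    (∀ w₁ w₂ : List Step, IsBigWalk w₁ → IsBigWalk w₂ → IsBigWalk (w₁ ++ w₂)) ∧
    (∀ m n : ℕ, bCount m * bCount n ≤ bCount (m + n)) :=
  ⟨fun _ _ => IsBigWalk.append, bCount_mul_le_bCount_add⟩
end

section
/- If p_{m²+4m+1} ≥ b̂_m^m for all m ≥ 1, p_n ≤ b_n ≤ 2 b̂_n for all n, and the limits μ_p = lim p_n^{1/n} and μ_b = lim b̂_n^{1/n} exist and are positive, then μ_p = μ_b. -/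
open Filter

/-- Abstract form of the growth-rate argument: from p_{m²+4m+1} ≥ b̂_m^m,
p_n ≤ b_n ≤ 2 b̂_n, and existence and positivity of the limits, the growth
rates of p and b̂ coincide. -/
theorem growth_rate_sandwich (p b bhat : ℕ → ℕ) (μp μb : ℝ)
    (hp : ∀ n, 0 < p n) (hb : ∀ n, 0 < b n) (hbhat : ∀ n, 0 < bhat n)
    (h1 : ∀ m : ℕ, 1 ≤ m → bhat m ^ m ≤ p (m ^ 2 + 4 * m + 1))
    (h2 : ∀ n, p n ≤ b n) (h3 : ∀ n, b n ≤ 2 * bhat n)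
    (hμp : Tendsto (fun n : ℕ => (p n : ℝ) ^ ((n : ℝ)⁻¹)) atTop (nhds μp))
    (hμb : Tendsto (fun n : ℕ => (bhat n : ℝ) ^ ((n : ℝ)⁻¹)) atTop (nhds μb))
    (hμp0 : 0 < μp) (hμb0 : 0 < μb) :
    μp = μb := by
  have hinv0 : Tendsto (fun m : ℕ => ((m : ℝ))⁻¹) atTop (nhds 0) :=
    tendsto_inv_atTop_zero.comp tendsto_natCast_atTop_atTop
  -- log limits
  have hf : Tendsto (fun n : ℕ => (n : ℝ)⁻¹ * Real.log (p n)) atTop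
      (nhds (Real.log μp)) := by
    have h := ((Real.continuousAt_log hμp0.ne').tendsto).comp hμp
    refine h.congr fun n => ?_
    simp [Function.comp, Real.log_rpow (by exact_mod_cast hp n : (0:ℝ) < (p n : ℝ))]
  have hg : Tendsto (fun n : ℕ => (n : ℝ)⁻¹ * Real.log (bhat n)) atTop
      (nhds (Real.log μb)) := by
    have h := ((Real.continuousAt_log hμb0.ne').tendsto).comp hμb
    refine h.congr fun n => ?_
    simp [Function.comp, Real.log_rpow (by exact_mod_cast hbhat n : (0:ℝ) < (bhat n : ℝ))]
  -- direction 1 : log μp ≤ log μb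
  have hle1 : Real.log μp ≤ Real.log μb := by
    have hbd : ∀ n : ℕ,
        (n : ℝ)⁻¹ * Real.log (p n) ≤
          (n : ℝ)⁻¹ * Real.log 2 + (n : ℝ)⁻¹ * Real.log (bhat n) := by
      intro n
      have hlog : Real.log (p n) ≤ Real.log 2 + Real.log (bhat n) := by
        have h4 : (p n : ℝ) ≤ 2 * (bhat n : ℝ) := by
          exact_mod_cast (h2 n).trans (h3 n)
        have := Real.log_le_log (by exact_mod_cast hp n) h4
        rwa [Real.log_mul (by norm_num) (by exact_mod_cast (hbhat n).ne')] at this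
      rw [← mul_add]
      exact mul_le_mul_of_nonneg_left hlog (by positivity)
    have hrhs : Tendsto
        (fun n : ℕ => (n : ℝ)⁻¹ * Real.log 2 + (n : ℝ)⁻¹ * Real.log (bhat n))
        atTop (nhds (Real.log μb)) := by
      simpa using (hinv0.mul_const (Real.log 2)).add hg
    exact le_of_tendsto_of_tendsto' hf hrhs hbd
  -- direction 2 : log μb ≤ log μp
  have hle2 : Real.log μb ≤ Real.log μp := by
    set N : ℕ → ℕ := fun m => m ^ 2 + 4 * m + 1 with hN
    have hNtop : Tendsto N atTop atTop := by
      apply tendsto_atTop_mono (fun m => ?_) tendsto_id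
      simp only [hN, id]
      nlinarith
    have hfN : Tendsto (fun m : ℕ => ((N m : ℝ))⁻¹ * Real.log (p (N m))) atTop
        (nhds (Real.log μp)) := hf.comp hNtop
    have hc : Tendsto (fun m : ℕ => (m : ℝ) ^ 2 / (N m : ℝ)) atTop (nhds 1) := by
      have hden : Tendsto (fun m : ℕ => 1 + 4 * (m : ℝ)⁻¹ + ((m : ℝ)⁻¹) ^ 2)
          atTop (nhds 1) := by
        have hone : Tendsto (fun _ : ℕ => (1:ℝ)) atTop (nhds 1) := tendsto_const_nhds
        have := (hone.add (hinv0.const_mul 4)).add (hinv0.pow 2)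
        simpa using this
      have hInv := hden.inv₀ (by norm_num)
      simp only [inv_one] at hInv
      refine hInv.congr' ?_
      filter_upwards [eventually_ge_atTop 1] with m hm
      have hm0 : (m : ℝ) ≠ 0 := by
        exact_mod_cast Nat.one_le_iff_ne_zero.mp hm
      have hN0 : ((N m : ℕ) : ℝ) ≠ 0 := by
        have : 0 < N m := by simp only [hN]; positivity
        exact_mod_cast this.ne'
      simp only [hN] at hN0 ⊢
      push_cast at hN0 ⊢
      field_simp
    have hprod : Tendsto
        (fun m : ℕ => ((m : ℝ) ^ 2 / (N m : ℝ)) * ((m : ℝ)⁻¹ * Real.log (bhat m)))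
        atTop (nhds (Real.log μb)) := by
      simpa using hc.mul hg
    have hbd2 : ∀ᶠ m : ℕ in atTop,
        ((m : ℝ) ^ 2 / (N m : ℝ)) * ((m : ℝ)⁻¹ * Real.log (bhat m)) ≤
          ((N m : ℝ))⁻¹ * Real.log (p (N m)) := by
      filter_upwards [eventually_ge_atTop 1] with m hm
      have hm0 : (m : ℝ) ≠ 0 := by
        exact_mod_cast Nat.one_le_iff_ne_zero.mp hm
      have key : (m : ℝ) * Real.log (bhat m) ≤ Real.log (p (N m)) := by
        have h5 : ((bhat m : ℝ)) ^ m ≤ (p (N m) : ℝ) := by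
          exact_mod_cast h1 m hm
        have := Real.log_le_log (pow_pos (by exact_mod_cast hbhat m) m) h5
        rwa [Real.log_pow] at this
      have hNpos : (0 : ℝ) < (N m : ℝ) := by
        have : 0 < N m := by simp only [hN]; positivity
        exact_mod_cast this
      have heq : ((m : ℝ) ^ 2 / (N m : ℝ)) * ((m : ℝ)⁻¹ * Real.log (bhat m)) =
          ((N m : ℝ))⁻¹ * ((m : ℝ) * Real.log (bhat m)) := by
        field_simp
      rw [heq]
      exact mul_le_mul_of_nonneg_left key (by positivity)
    exact le_of_tendsto_of_tendsto hprod hfN hbd2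
  have hlog : Real.log μp = Real.log μb := le_antisymm hle1 hle2
  have := congrArg Real.exp hlog
  rwa [Real.exp_log hμp0, Real.exp_log hμb0] at this
end

section
/- If d_n is a supermultiplicative positive sequence (d_{m+n} ≥ d_m d_n) with growth rate μ = lim d_n^{1/n}, and t_0 > 0 is such that Σ_{n=1}^N v_n t_0^n ≥ 1 where v_n are defined by the relation Σ d_n t^n = 1/(1 - Σ v_n t^n) (as formal power series) and all v_n ≥ 0, then μ ≥ 1/t_0. -/
/-!
Rescale by `t0ⁿ`: the sequence `aₙ = dₙ t0ⁿ` satisfies the renewal recursion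
`aₙ = ∑ₖ wₖ aₙ₋ₖ` with nonnegative weights `wₖ = vₖ t0ᵏ` whose first `N` sum to at least `1`,
so each `aₙ` with `n ≥ N` is at least the minimum of the preceding values. Hence `aₙ` stays
above the positive minimum `c` of `a₀, …, a_{N-1}`, i.e. `dₙ ≥ c t0⁻ⁿ`, and taking `n`-th roots
gives `μ ≥ 1 / t0`.
-/

open Filter Topology Finset

theorem tendsto_const_rpow_inv_natCast {c : ℝ} (hc : c ≠ 0) :
    Tendsto (fun n : ℕ => c ^ (n : ℝ)⁻¹) atTop (𝓝 1) := by
  have h := (Real.continuousAt_const_rpow hc).tendsto.comp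
    (tendsto_inv_atTop_nhds_zero_nat (𝕜 := ℝ))
  rwa [Real.rpow_zero] at h

theorem exists_pos_forall_lt_le {a : ℕ → ℝ} (ha : ∀ n, 0 < a n) (N : ℕ) :
    ∃ c, 0 < c ∧ ∀ n < N, c ≤ a n := by
  induction N with
  | zero => exact ⟨1, one_pos, fun n hn => absurd hn n.not_lt_zero⟩
  | succ N ih =>
    obtain ⟨c, hc, hle⟩ := ih
    refine ⟨min c (a N), lt_min hc (ha N), fun n hn => ?_⟩
    rcases Nat.lt_succ_iff_lt_or_eq.mp hn with hn | rfl
    · exact (min_le_left _ _).trans (hle n hn)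
    · exact min_le_right _ _

theorem le_of_renewal {a w : ℕ → ℝ} {N : ℕ} {c : ℝ} (hc : 0 ≤ c) (hw : ∀ k, 0 ≤ w k)
    (hwN : 1 ≤ ∑ k ∈ Icc 1 N, w k)
    (hrec : ∀ n, N ≤ n → a n = ∑ k ∈ Icc 1 n, w k * a (n - k))
    (hinit : ∀ n < N, c ≤ a n) (n : ℕ) : c ≤ a n := by
  induction n using Nat.strong_induction_on with
  | _ n ih =>
    rcases lt_or_ge n N with hn | hn
    · exact hinit n hn
    have hprev : ∀ k ∈ Icc 1 n, c ≤ a (n - k) := fun k hk =>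
      ih _ (Nat.sub_lt (by grind) (mem_Icc.mp hk).1)
    calc c ≤ (∑ k ∈ Icc 1 N, w k) * c := le_mul_of_one_le_left hc hwN
      _ = ∑ k ∈ Icc 1 N, w k * c := sum_mul _ _ _
      _ ≤ ∑ k ∈ Icc 1 N, w k * a (n - k) := by
        gcongr with k hk
        · exact hw k
        · exact hprev k (Icc_subset_Icc_right hn hk)
      _ ≤ ∑ k ∈ Icc 1 n, w k * a (n - k) :=
        sum_le_sum_of_subset_of_nonneg (Icc_subset_Icc_right hn) fun k hk _ =>
          mul_nonneg (hw k) (hc.trans (hprev k hk))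
      _ = a n := (hrec n hn).symm

theorem inv_le_of_le_mul_pow {d : ℕ → ℝ} {t c μ : ℝ} (ht : 0 < t) (hc : 0 < c)
    (hlow : ∀ n, c ≤ d n * t ^ n)
    (hμ : Tendsto (fun n : ℕ => d n ^ (n : ℝ)⁻¹) atTop (𝓝 μ)) : t⁻¹ ≤ μ := by
  have hroot : Tendsto (fun n : ℕ => c ^ (n : ℝ)⁻¹ * t⁻¹) atTop (𝓝 t⁻¹) := by
    simpa using (tendsto_const_rpow_inv_natCast hc.ne').mul_const t⁻¹
  refine le_of_tendsto_of_tendsto hroot hμ ?_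
  filter_upwards [eventually_ne_atTop 0] with n hn
  have htn : 0 < t ^ n := pow_pos ht n
  calc c ^ (n : ℝ)⁻¹ * t⁻¹ = (c / t ^ n) ^ (n : ℝ)⁻¹ := by
        rw [Real.div_rpow hc.le htn.le, Real.pow_rpow_inv_natCast ht.le hn, div_eq_mul_inv]
    _ ≤ d n ^ (n : ℝ)⁻¹ :=
        Real.rpow_le_rpow (div_pos hc htn).le ((div_le_iff₀ htn).mpr (hlow n)) (by positivity)

theorem growth_lower_bound_general (d v : ℕ → ℝ) (N : ℕ) (t0 μ : ℝ)
    (hdpos : ∀ n, 0 < d n)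
    (hμ : Tendsto (fun n : ℕ => d n ^ ((n : ℝ)⁻¹)) atTop (nhds μ))
    (hv : ∀ n, 0 ≤ v n)
    (hrel : ∀ n : ℕ, 1 ≤ n → d n = ∑ k ∈ Finset.Icc 1 n, v k * d (n - k))
    (ht0 : 0 < t0)
    (hVN : 1 ≤ ∑ k ∈ Finset.Icc 1 N, v k * t0 ^ k) :
    1 / t0 ≤ μ := by
  have hN : 1 ≤ N := by
    by_contra! h
    simp [Nat.lt_one_iff.mp h] at hVN; linarith
  have hscaled : ∀ n, N ≤ n →
      d n * t0 ^ n = ∑ k ∈ Icc 1 n, v k * t0 ^ k * (d (n - k) * t0 ^ (n - k)) := by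
    intro n hn
    rw [hrel n (hN.trans hn), sum_mul]
    refine sum_congr rfl fun k hk => ?_
    rw [← pow_mul_pow_sub t0 (mem_Icc.mp hk).2]
    ring
  obtain ⟨c, hc, hinit⟩ := exists_pos_forall_lt_le (fun n => mul_pos (hdpos n) (pow_pos ht0 n)) N
  rw [one_div]
  exact inv_le_of_le_mul_pow ht0 hc
    (le_of_renewal hc.le (fun k => mul_nonneg (hv k) (pow_pos ht0 k).le) hVN hscaled hinit) hμ

/-- The lower-bound method: if d is a supermultiplicative positive sequence with
growth rate μ = lim d_n^{1/n}, d_0 = 1, and the nonnegative sequence v defined by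
D = 1/(1-V) (i.e. d_n = Σ_{k=1}^n v_k d_{n-k} for n ≥ 1) satisfies
Σ_{n=1}^N v_n t₀ⁿ ≥ 1 for some t₀ > 0, then μ ≥ 1/t₀. -/
theorem growth_lower_bound (d v : ℕ → ℝ) (N : ℕ) (t0 μ : ℝ)
    (hd0 : d 0 = 1) (hdpos : ∀ n, 0 < d n)
    (hsup : ∀ m n : ℕ, d m * d n ≤ d (m + n))
    (hμ : Tendsto (fun n : ℕ => d n ^ ((n : ℝ)⁻¹)) atTop (nhds μ))
    (hv : ∀ n, 0 ≤ v n)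
    (hrel : ∀ n : ℕ, 1 ≤ n → d n = ∑ k ∈ Finset.Icc 1 n, v k * d (n - k))
    (ht0 : 0 < t0)
    (hVN : 1 ≤ ∑ k ∈ Finset.Icc 1 N, v k * t0 ^ k) :
    1 / t0 ≤ μ :=
  growth_lower_bound_general d v N t0 μ hdpos hμ hv hrel ht0 hVN
end

section
/- If a_n and c_n are positive sequences with lim a_n^{1/n} = α and lim c_n^{1/n} = γ both existing, a_n ≤ c_n for all n, and for each m there exists n_m with n_m / m² → 1 such that a_{n_m} ≥ c_m^m, then α = γ. -/
open Filter

/-- A general sandwich lemma: if a_n ≤ c_n, both growth rates exist, and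
a_{n_m} ≥ c_m^m along a sequence n_m with n_m/m² → 1, then the growth
rates coincide. -/
theorem sandwich_growth (a c : ℕ → ℝ) (α γ : ℝ) (nm : ℕ → ℕ)
    (ha : ∀ n, 0 < a n) (hc : ∀ n, 0 < c n)
    (hα : Tendsto (fun n : ℕ => a n ^ ((n : ℝ)⁻¹)) atTop (nhds α))
    (hγ : Tendsto (fun n : ℕ => c n ^ ((n : ℝ)⁻¹)) atTop (nhds γ))
    (hle : ∀ n, a n ≤ c n)
    (hnm : Tendsto (fun m : ℕ => (nm m : ℝ) / (m : ℝ) ^ 2) atTop (nhds 1))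
    (hineq : ∀ m, c m ^ m ≤ a (nm m)) :
    α = γ := by
  have hαle : α ≤ γ := by
    refine le_of_tendsto_of_tendsto' hα hγ (fun n => ?_)
    exact Real.rpow_le_rpow (ha n).le (hle n) (by positivity)
  have hα0 : 0 ≤ α := by
    refine ge_of_tendsto' hα (fun n => ?_)
    exact Real.rpow_nonneg (ha n).le _
  rcases le_or_gt γ 0 with hγ0 | hγ0
  · exact le_antisymm hαle (hγ0.trans hα0)
  -- nm tends to atTop
  have hnmTop : Tendsto nm atTop atTop := by
    rw [← tendsto_natCast_atTop_iff (R := ℝ)]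
    have hsq : Tendsto (fun m : ℕ => ((m : ℝ)) ^ 2) atTop atTop :=
      (tendsto_pow_atTop two_ne_zero).comp (tendsto_natCast_atTop_atTop (R := ℝ))
    have := hnm.pos_mul_atTop one_pos hsq
    refine this.congr' ?_
    filter_upwards [eventually_gt_atTop 0] with m hm
    have : ((m : ℝ)) ^ 2 ≠ 0 := by positivity
    field_simp
  -- limit of a (nm m) ^ (nm m)⁻¹ is α
  have f1 : Tendsto (fun m : ℕ => a (nm m) ^ ((nm m : ℝ))⁻¹) atTop (nhds α) :=
    hα.comp hnmTop
  -- exponent m²/nm m → 1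
  have he : Tendsto (fun m : ℕ => ((m : ℝ) ^ 2) / (nm m : ℝ)) atTop (nhds 1) := by
    have := hnm.inv₀ one_ne_zero
    simpa [one_div] using this.congr (fun m => by rw [inv_div])
  -- limit of c m ^ (m * (nm m)⁻¹) is γ
  have f2 : Tendsto (fun m : ℕ => (c m ^ ((m : ℝ))⁻¹) ^ ((m : ℝ) ^ 2 / (nm m : ℝ)))
      atTop (nhds γ) := by
    have := hγ.rpow he (Or.inl hγ0.ne')
    simpa using this
  have hγle : γ ≤ α := by
    refine le_of_tendsto_of_tendsto f2 f1 ?_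
    filter_upwards [hnmTop.eventually (eventually_gt_atTop 0), eventually_gt_atTop 0]
      with m hnm0 hm0
    have h1 : (0:ℝ) < (nm m : ℝ) := by exact_mod_cast hnm0
    have h2 : (0:ℝ) < (m : ℝ) := by exact_mod_cast hm0
    have key : (c m ^ m : ℝ) ^ ((nm m : ℝ))⁻¹ ≤ a (nm m) ^ ((nm m : ℝ))⁻¹ :=
      Real.rpow_le_rpow (pow_pos (hc m) m).le (hineq m) (by positivity)
    calc (c m ^ ((m : ℝ))⁻¹) ^ ((m : ℝ) ^ 2 / (nm m : ℝ))
        = c m ^ (((m : ℝ))⁻¹ * ((m : ℝ) ^ 2 / (nm m : ℝ))) := by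
          rw [← Real.rpow_mul (hc m).le]
      _ = (c m ^ m : ℝ) ^ ((nm m : ℝ))⁻¹ := by
          rw [← Real.rpow_natCast (c m) m, ← Real.rpow_mul (hc m).le]
          congr 1
          field_simp
      _ ≤ a (nm m) ^ ((nm m : ℝ))⁻¹ := key
  exact le_antisymm hαle hγle
end
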